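/- Let k ≥ 3 be an integer and let G be a finite connected (k+1)-colorable graph that has a universal vertex. Let G* be the graph obtained from G by attaching to each vertex a of G a private copy of the gadget G_k, identifying a with the vertex u of that copy. Then χ(G) ≤ k if and only if χ_c(G*) = k + 1. -/

import Mathlib

open SimpleGraph

/-- One step of the greedy coloring algorithm: color the vertex `w` with the smallest
positive integer not already used on one of its (already colored) neighbours.
Color `0` means "not yet colored". -/
noncomputable def greedyStep {V : Type*} [DecidableEq V] (G : SimpleGraph V)
    (f : V → ℕ) (w : V) : V → ℕ :=
  Function.update f w (sInf {n : ℕ | 0 < n ∧ ∀ z, G.Adj w z → f z ≠ n})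

/-- The coloring obtained by greedily coloring the vertices of the list `l` in order,
starting from the partial coloring `f₀`. -/
noncomputable def greedyFrom {V : Type*} [DecidableEq V] (G : SimpleGraph V)
    (f₀ : V → ℕ) (l : List V) : V → ℕ :=
  l.foldl (greedyStep G) f₀

/-- The greedy coloring of the ordering `l` (all vertices initially uncolored). -/
noncomputable def greedy {V : Type*} [DecidableEq V] (G : SimpleGraph V)
    (l : List V) : V → ℕ :=
  greedyFrom G (fun _ => 0) l

/-- `l` is a connected ordering of the vertices of `G`: it lists every vertex exactly once,
and every vertex other than the first has a neighbour occurring earlier in the list. -/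
def IsConnectedOrder {V : Type*} (G : SimpleGraph V) (l : List V) : Prop :=
  l.Nodup ∧ (∀ w : V, w ∈ l) ∧
    ∀ i : Fin l.length, 0 < (i : ℕ) →
      ∃ j : Fin l.length, (j : ℕ) < (i : ℕ) ∧ G.Adj (l.get i) (l.get j)

/-- `f` is a connected greedy coloring (CGC) of `G`. -/
def IsCGC {V : Type*} [DecidableEq V] (G : SimpleGraph V) (f : V → ℕ) : Prop :=
  ∃ l : List V, IsConnectedOrder G l ∧ f = greedy G l

/-- `f` is an `(x, α)`-connected greedy coloring of `G`: it is obtained from a connected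
ordering starting at `x` by coloring `x` with `α` and then coloring each subsequent
vertex with the smallest positive integer not appearing on its already-colored
neighbours. -/
def IsCGCFrom {V : Type*} [DecidableEq V] (G : SimpleGraph V) (x : V) (α : ℕ)
    (f : V → ℕ) : Prop :=
  ∃ l : List V, IsConnectedOrder G (x :: l) ∧
    f = greedyFrom G (Function.update (fun _ => 0) x α) l

/-- `f` uses exactly `k` colors. -/
def UsesColors {V : Type*} (f : V → ℕ) (k : ℕ) : Prop :=
  ∃ s : Finset ℕ, (∀ w, f w ∈ s) ∧ (∀ c ∈ s, ∃ w, f w = c) ∧ s.card = k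

/-- The connected chromatic number of `G`: the least `k` such that some connected greedy
coloring of `G` only uses colors in `{1, …, k}`. -/
noncomputable def connChrom {V : Type*} [DecidableEq V] (G : SimpleGraph V) : ℕ :=
  sInf {k | ∃ f, IsCGC G f ∧ ∀ w, f w ≤ k}

/-- The vertices of the gadget `G_k`: three cliques `U`, `W` (called `V` in the paper)
and `M` of size `k` each (the distinguished vertex `w` of `M` is `M i` with `i.val = 0`),
together with four special vertices `u, u', v, v'`. -/
inductive GkVert (k : ℕ) where
  | U : Fin k → GkVert k
  | W : Fin k → GkVert k
  | M : Fin k → GkVert k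
  | u : GkVert k
  | u' : GkVert k
  | v : GkVert k
  | v' : GkVert k
deriving DecidableEq

/-- The gadget `G_k`: `U`, `W` and `M` are cliques, `u` and `u'` are complete to `U`,
`v` and `v'` are complete to `W`, `u` and `v` are complete to `M ∖ {w}`, and
`u'` and `v'` are adjacent to `w` (where `w` is the vertex `M i` with `i.val = 0`). -/
def Gk (k : ℕ) : SimpleGraph (GkVert k) :=
  SimpleGraph.fromRel (fun a b =>
    (∃ i j, a = GkVert.U i ∧ b = GkVert.U j) ∨
    (∃ i j, a = GkVert.W i ∧ b = GkVert.W j) ∨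
    (∃ i j, a = GkVert.M i ∧ b = GkVert.M j) ∨
    (∃ i, a = GkVert.u ∧ b = GkVert.U i) ∨
    (∃ i, a = GkVert.u' ∧ b = GkVert.U i) ∨
    (∃ i, a = GkVert.v ∧ b = GkVert.W i) ∨
    (∃ i, a = GkVert.v' ∧ b = GkVert.W i) ∨
    (∃ i : Fin k, i.val ≠ 0 ∧ a = GkVert.u ∧ b = GkVert.M i) ∨
    (∃ i : Fin k, i.val ≠ 0 ∧ a = GkVert.v ∧ b = GkVert.M i) ∨
    (∃ i : Fin k, i.val = 0 ∧ a = GkVert.u' ∧ b = GkVert.M i) ∨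
    (∃ i : Fin k, i.val = 0 ∧ a = GkVert.v' ∧ b = GkVert.M i))


/-- The vertices of the copy of the gadget `G_k` attached at the vertex `a` of `G`:
the vertex `u` of the gadget is identified with `a` itself, and the remaining gadget
vertices become private copies. -/
def gadgetEmb {V : Type*} [DecidableEq V] (k : ℕ) (a : V) :
    GkVert k → V ⊕ (V × {t : GkVert k // t ≠ GkVert.u}) :=
  fun t => if h : t = GkVert.u then Sum.inl a else Sum.inr (a, ⟨t, h⟩)

/-- The graph `G*` obtained from `G` by attaching to each vertex `a` of `G` a private
copy of the gadget `G_k`, identifying `a` with the vertex `u` of that copy. -/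
def Gstar {V : Type*} [DecidableEq V] (G : SimpleGraph V) (k : ℕ) :
    SimpleGraph (V ⊕ (V × {t : GkVert k // t ≠ GkVert.u})) :=
  SimpleGraph.fromRel (fun x y =>
    (∃ a b, x = Sum.inl a ∧ y = Sum.inl b ∧ G.Adj a b) ∨
    (∃ (a : V) (s t : GkVert k), (Gk k).Adj s t ∧ x = gadgetEmb k a s ∧ y = gadgetEmb k a t))


/-!
If `G` is `k`-colorable, color `G` first, starting at the universal vertex and then in
increasing order of a `k`-coloring in which the universal vertex has the smallest color: greedy
then uses at most `k` colors on `G`. Each gadget is colored afterwards in the order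
`U, u', M ∖ {w}, v, W, v', w`; if `u` has color `α`, the vertices `u'`, `v`, `v'` get `α` again and
only `w` receives `k + 1`. The clique `U ∪ {u}` shows that `k + 1` colors are always needed.

Conversely, take a connected greedy coloring with at most `k + 1` colors in which a vertex `u` of
`G` has color `k + 1`. Counting colors in the cliques of its gadget forces color `k + 1` on `u'`,
`v` and `v'`. The first vertex of `W ∪ {v, v'}` in the ordering cannot be `v` or `v'`, which
would have fewer than `k` earlier neighbours, so it is a vertex of `W` starting the ordering. Then
the first vertex outside `M ∪ W ∪ {v, v'}` has an earlier neighbour in `M`, so it is `u` or `u'`,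
and again has fewer than `k` earlier neighbours. Hence the coloring is a `k`-coloring on `G`.
-/

theorem Nat.sInf_mem_and_le_card_succ {S : Set ℕ} (T : Finset ℕ)
    (hT : ∀ n, 0 < n → n ∉ T → n ∈ S) : sInf S ∈ S ∧ sInf S ≤ T.card + 1 := by
  obtain ⟨n, hn, hnT⟩ := Finset.exists_mem_notMem_of_card_lt_card
    (s := T) (t := Finset.Icc 1 (T.card + 1)) (by simp)
  rw [Finset.mem_Icc] at hn
  have hnS := hT n hn.1 hnT
  exact ⟨Nat.sInf_mem ⟨n, hnS⟩, (Nat.sInf_le hnS).trans hn.2⟩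

theorem exists_apply_eq_of_injective_Icc {m : ℕ} {c : Fin m → ℕ} (hc : Function.Injective c)
    (hmem : ∀ i, c i ∈ Finset.Icc 1 m) {n : ℕ} (hn : n ∈ Finset.Icc 1 m) : ∃ i, c i = n := by
  obtain ⟨i, -, hi⟩ := Finset.surjOn_of_injOn_of_card_le c (s := Finset.univ)
    (fun i _ => hmem i) hc.injOn (by simp) hn
  exact ⟨i, hi⟩

theorem Finset.exists_list_nodup_pairwise_le {α : Type*} (s : Finset α) (key : α → ℕ) :
    ∃ l : List α, l.Nodup ∧ (∀ a, a ∈ l ↔ a ∈ s) ∧ l.Pairwise fun a b => key a ≤ key b := by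
  have hperm := List.mergeSort_perm s.toList fun a b => decide (key a ≤ key b)
  refine ⟨_, hperm.nodup_iff.mpr s.nodup_toList, fun a => by rw [hperm.mem_iff, mem_toList], ?_⟩
  refine (List.pairwise_mergeSort (fun a b c hab hbc => ?_) (fun a b => ?_) _).imp (by simp)
  · simp only [decide_eq_true_eq] at hab hbc ⊢; omega
  · simp only [Bool.or_eq_true, decide_eq_true_eq]; omega

theorem SimpleGraph.Colorable.exists_color_eq_one {V : Type*} {G : SimpleGraph V} {k : ℕ}
    (hcol : G.Colorable k) (x : V) :
    ∃ c : V → ℕ, (∀ a b, G.Adj a b → c a ≠ c b) ∧ (∀ b, 0 < c b ∧ c b ≤ k) ∧ c x = 1 := by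
  obtain ⟨C⟩ := hcol
  let σ := Equiv.swap (C x) ⟨0, (C x).pos⟩
  refine ⟨fun b => σ (C b) + 1, fun a b h hc => C.valid h (σ.injective (Fin.ext ?_)),
    fun b => ⟨Nat.succ_pos _, (σ (C b)).isLt⟩, by simp [σ]⟩
  simpa using hc

section Greedy

variable {V : Type*} [DecidableEq V] (G : SimpleGraph V)

theorem greedyFrom_cons (f : V → ℕ) (w : V) (l : List V) :
    greedyFrom G f (w :: l) = greedyFrom G (greedyStep G f w) l := rfl

theorem greedyFrom_append (f : V → ℕ) (l₁ l₂ : List V) :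
    greedyFrom G f (l₁ ++ l₂) = greedyFrom G (greedyFrom G f l₁) l₂ := List.foldl_append

theorem greedyFrom_of_notMem {f : V → ℕ} {l : List V} {z : V} (h : z ∉ l) :
    greedyFrom G f l z = f z := by
  induction l generalizing f with
  | nil => rfl
  | cons w l ih =>
    rw [List.mem_cons, not_or] at h
    rw [greedyFrom_cons, ih h.2, greedyStep, Function.update_of_ne h.1]

theorem greedyFrom_append_cons_self {f : V → ℕ} {l₁ l₂ : List V} {w : V} (hw : w ∉ l₂) :
    greedyFrom G f (l₁ ++ w :: l₂) w =
      sInf {n | 0 < n ∧ ∀ z, G.Adj w z → greedyFrom G f l₁ z ≠ n} := by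
  rw [greedyFrom_append, greedyFrom_cons, greedyFrom_of_notMem G hw, greedyStep,
    Function.update_self]

theorem greedyStep_self_eq {f : V → ℕ} {w : V} {c : ℕ} (hc : 0 < c)
    (hfree : ∀ z, G.Adj w z → f z ≠ c) (hused : ∀ n, 0 < n → n < c → ∃ z, G.Adj w z ∧ f z = n) :
    greedyStep G f w w = c := by
  rw [greedyStep, Function.update_self]
  refine IsLeast.csInf_eq ⟨⟨hc, hfree⟩, fun n ⟨hn, hall⟩ => ?_⟩
  by_contra! hlt
  obtain ⟨z, hz, rfl⟩ := hused n hn hlt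
  exact hall z hz rfl

theorem greedyStep_self_pos_le {f : V → ℕ} {w : V} {c : ℕ} (hc : 0 < c)
    (hfree : ∀ z, G.Adj w z → f z ≠ c) : 0 < greedyStep G f w w ∧ greedyStep G f w w ≤ c := by
  have hmem : c ∈ {n | 0 < n ∧ ∀ z, G.Adj w z → f z ≠ n} := ⟨hc, hfree⟩
  rw [greedyStep, Function.update_self]
  exact ⟨(Nat.sInf_mem ⟨_, hmem⟩).1, Nat.sInf_le hmem⟩

/-- `R z w` certifies that `z` comes before `w` in `l`. -/
theorem greedyFrom_eq_of_grundy (R : V → V → Prop) {f₀ c : V → ℕ} {l : List V}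
    (hnd : l.Nodup) (hR : l.Pairwise fun p q => ¬ R q p)
    (hin : ∀ z ∈ l, f₀ z = 0) (hout : ∀ z ∉ l, f₀ z = c z)
    (hpos : ∀ w ∈ l, 0 < c w) (hproper : ∀ w ∈ l, ∀ z, G.Adj w z → c z ≠ c w)
    (hgrundy : ∀ w ∈ l, ∀ n, 0 < n → n < c w →
      ∃ z, G.Adj w z ∧ c z = n ∧ (z ∉ l ∨ R z w)) :
    greedyFrom G f₀ l = c := by
  induction l generalizing f₀ with
  | nil => funext z; exact hout z List.not_mem_nil
  | cons w l ih =>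
    obtain ⟨hwl, hnd⟩ := List.nodup_cons.mp hnd
    obtain ⟨hRw, hR⟩ := List.pairwise_cons.mp hR
    have hstep : greedyStep G f₀ w w = c w := by
      refine greedyStep_self_eq G (hpos w (by simp)) (fun z hz => ?_) fun n hn hlt => ?_
      · by_cases hzl : z ∈ w :: l
        · rw [hin z hzl]; exact (hpos w (by simp)).ne
        · rw [hout z hzl]; exact hproper w (by simp) z hz
      · obtain ⟨z, hz, hcz, hzR⟩ := hgrundy w (by simp) n hn hlt
        have hzl : z ∉ w :: l := by
          rintro (_ | ⟨_, hzl⟩)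
          · exact G.irrefl hz
          · exact hzR.elim (· (List.mem_cons_of_mem _ hzl)) (hRw z hzl)
        exact ⟨z, hz, by rw [hout z hzl, hcz]⟩
    apply ih hnd hR
    · intro z hz
      rw [greedyStep, Function.update_of_ne (ne_of_mem_of_not_mem hz hwl)]
      exact hin z (List.mem_cons_of_mem _ hz)
    · intro z hz
      by_cases hzw : z = w
      · rw [hzw, hstep]
      · rw [greedyStep, Function.update_of_ne hzw]
        exact hout z (by simp [hzw, hz])
    · exact fun w' hw' => hpos w' (List.mem_cons_of_mem _ hw')
    · exact fun w' hw' => hproper w' (List.mem_cons_of_mem _ hw')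
    · intro w' hw' n hn hlt
      obtain ⟨z, hz, hcz, hzR⟩ := hgrundy w' (List.mem_cons_of_mem _ hw') n hn hlt
      exact ⟨z, hz, hcz, hzR.imp_left fun h hzl => h (List.mem_cons_of_mem _ hzl)⟩

theorem greedyFrom_le_of_pairwise {f₀ c : V → ℕ} {l : List V} (hnd : l.Nodup)
    (hl : l.Pairwise fun p q => G.Adj p q → c p < c q)
    (hin : ∀ z ∈ l, f₀ z = 0) (hout : ∀ w ∈ l, ∀ z ∉ l, G.Adj w z → f₀ z < c w)
    (hpos : ∀ w ∈ l, 0 < c w) :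
    ∀ w ∈ l, 0 < greedyFrom G f₀ l w ∧ greedyFrom G f₀ l w ≤ c w := by
  induction l generalizing f₀ with
  | nil => simp
  | cons w l ih =>
    obtain ⟨hwl, hnd⟩ := List.nodup_cons.mp hnd
    obtain ⟨hlw, hl⟩ := List.pairwise_cons.mp hl
    have hstep : 0 < greedyStep G f₀ w w ∧ greedyStep G f₀ w w ≤ c w := by
      refine greedyStep_self_pos_le G (hpos w (by simp)) fun z hz => ?_
      by_cases hzl : z ∈ w :: l
      · rw [hin z hzl]; exact (hpos w (by simp)).ne
      · exact (hout w (by simp) z hzl hz).ne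
    rintro w' (_ | ⟨_, hw'⟩)
    · rwa [greedyFrom_cons, greedyFrom_of_notMem G hwl]
    apply ih hnd hl _ _ (fun w' hw' => hpos w' (List.mem_cons_of_mem _ hw')) w' hw'
    · intro z hz
      rw [greedyStep, Function.update_of_ne (ne_of_mem_of_not_mem hz hwl)]
      exact hin z (List.mem_cons_of_mem _ hz)
    · intro w' hw' z hz hadj
      by_cases hzw : z = w
      · subst hzw; exact hstep.2.trans_lt (hlw w' hw' hadj.symm)
      · rw [greedyStep, Function.update_of_ne hzw]
        exact hout w' (List.mem_cons_of_mem _ hw') z (by simp [hzw, hz]) hadj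

theorem greedy_append_apply_of_mem {l₁ l₂ : List V} {z : V} (hnd : (l₁ ++ l₂).Nodup)
    (hz : z ∈ l₁) : greedy G (l₁ ++ l₂) z = greedyFrom G (fun _ => 0) l₁ z := by
  rw [greedy, greedyFrom_append, greedyFrom_of_notMem G (List.disjoint_of_nodup_append hnd hz)]

variable {G}

theorem greedy_append_cons_self {l₁ l₂ : List V} {w : V} (hnd : (l₁ ++ w :: l₂).Nodup) :
    greedy G (l₁ ++ w :: l₂) w =
      sInf {n | 0 < n ∧ ∀ z ∈ l₁, G.Adj w z → greedy G (l₁ ++ w :: l₂) z ≠ n} := by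
  have hw : w ∉ l₂ := (List.nodup_cons.mp hnd.of_append_right).1
  conv_lhs => rw [greedy, greedyFrom_append_cons_self G hw]
  congr 1; ext n
  refine and_congr_right fun hn => ⟨fun h z hz hadj => ?_, fun h z hadj => ?_⟩
  · rw [greedy_append_apply_of_mem G hnd hz]; exact h z hadj
  · by_cases hz : z ∈ l₁
    · rw [← greedy_append_apply_of_mem G hnd hz]; exact h z hz hadj
    · rw [greedyFrom_of_notMem G hz]; exact hn.ne

theorem greedy_append_cons_le_card_succ {l₁ l₂ : List V} {w : V}
    (hnd : (l₁ ++ w :: l₂).Nodup) (T : Finset V) (hT : ∀ z ∈ l₁, G.Adj w z → z ∈ T) :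
    greedy G (l₁ ++ w :: l₂) w ≤ T.card + 1 := by
  rw [greedy_append_cons_self hnd]
  refine ((Nat.sInf_mem_and_le_card_succ (T.image (greedy G (l₁ ++ w :: l₂))) ?_).2).trans
    (by gcongr; exact Finset.card_image_le)
  exact fun n hn hnT =>
    ⟨hn, fun z hz hadj hzn => hnT (Finset.mem_image.mpr ⟨z, hT z hz hadj, hzn⟩)⟩

theorem greedy_append_cons_pos_and_ne {l₁ l₂ : List V} {w : V}
    (hnd : (l₁ ++ w :: l₂).Nodup) :
    0 < greedy G (l₁ ++ w :: l₂) w ∧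
      ∀ z ∈ l₁, G.Adj w z → greedy G (l₁ ++ w :: l₂) z ≠ greedy G (l₁ ++ w :: l₂) w := by
  rw [greedy_append_cons_self hnd]
  exact (Nat.sInf_mem_and_le_card_succ
    (S := {n | 0 < n ∧ ∀ z ∈ l₁, G.Adj w z → greedy G (l₁ ++ w :: l₂) z ≠ n})
    (l₁.toFinset.image (greedy G (l₁ ++ w :: l₂))) fun n hn hnT => ⟨hn, fun z hz _ hzn =>
      hnT (Finset.mem_image.mpr ⟨z, List.mem_toFinset.mpr hz, hzn⟩)⟩).1

theorem greedy_pos {l : List V} (hnd : l.Nodup) {w : V} (hw : w ∈ l) : 0 < greedy G l w := by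
  obtain ⟨l₁, l₂, rfl⟩ := List.append_of_mem hw
  exact (greedy_append_cons_pos_and_ne hnd).1

theorem greedy_ne_of_adj {l : List V} (hnd : l.Nodup) {w z : V} (hw : w ∈ l) (hz : z ∈ l)
    (hadj : G.Adj w z) : greedy G l w ≠ greedy G l z := by
  obtain ⟨l₁, l₂, rfl⟩ := List.append_of_mem hw
  rcases List.mem_append.mp hz with hz₁ | hz₂
  · exact ((greedy_append_cons_pos_and_ne hnd).2 z hz₁ hadj).symm
  obtain rfl | hz₂ := List.mem_cons.mp hz₂
  · exact absurd hadj G.irrefl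
  · obtain ⟨m₁, m₂, rfl⟩ := List.append_of_mem hz₂
    have hsplit : l₁ ++ w :: (m₁ ++ z :: m₂) = (l₁ ++ w :: m₁) ++ z :: m₂ := by simp
    rw [hsplit] at hnd ⊢
    exact (greedy_append_cons_pos_and_ne hnd).2 w (by simp) hadj.symm

end Greedy

section ConnectedOrder

variable {V : Type*} {G : SimpleGraph V}

theorem IsConnectedOrder.exists_adj_of_eq_append {l₁ l₂ : List V} {z : V}
    (hl : IsConnectedOrder G (l₁ ++ z :: l₂)) (h₁ : l₁ ≠ []) : ∃ y ∈ l₁, G.Adj z y := by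
  obtain ⟨j, hj, hadj⟩ := hl.2.2 ⟨l₁.length, by simp⟩ (List.length_pos_of_ne_nil h₁)
  simp only [List.get_eq_getElem, List.getElem_append_right (le_refl _), Nat.sub_self,
    List.getElem_cons_zero, List.getElem_append_left hj] at hadj
  exact ⟨_, List.getElem_mem _, hadj⟩

theorem isConnectedOrder_of_rank (ρ : V → ℕ) {x₀ : V} {l : List V} (hnd : (x₀ :: l).Nodup)
    (hmem : ∀ w, w ∈ x₀ :: l) (hsort : (x₀ :: l).Pairwise fun p q => ρ p ≤ ρ q)
    (hadj : ∀ z, z ≠ x₀ → ∃ y, G.Adj z y ∧ ρ y < ρ z) : IsConnectedOrder G (x₀ :: l) := by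
  refine ⟨hnd, hmem, fun i hi => ?_⟩
  have hne : (x₀ :: l).get i ≠ x₀ := fun h => by
    have := (List.Nodup.get_inj_iff hnd (j := ⟨0, by simp⟩)).mp h
    exact hi.ne' (congrArg Fin.val this)
  obtain ⟨y, hzy, hρ⟩ := hadj _ hne
  obtain ⟨j, rfl⟩ := List.get_of_mem (hmem y)
  refine ⟨j, ?_, hzy⟩
  by_contra! hij
  rcases hij.eq_or_lt with h | h
  · rw [Fin.ext h] at hzy
    exact G.irrefl hzy
  · exact absurd (List.pairwise_iff_get.mp hsort _ _ h) (not_le.mpr hρ)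

variable [DecidableEq V]

/-- `z` is the first vertex of `S` in `l`, so all its earlier neighbours lie outside `S`. -/
theorem IsConnectedOrder.exists_first_mem {l : List V} (hl : IsConnectedOrder G l) (S : Set V)
    (hS : S.Nonempty) :
    ∃ z ∈ S, (∀ T : Finset V, (∀ y, G.Adj z y → y ∉ S → y ∈ T) → greedy G l z ≤ T.card + 1) ∧
      (l.head? = some z ∨ ∃ y ∉ S, G.Adj z y) := by
  classical
  obtain ⟨y₀, hy₀⟩ := hS
  obtain ⟨z, hz⟩ : ∃ z, l.find? (· ∈ S) = some z :=
    Option.isSome_iff_exists.mp (List.find?_isSome.mpr ⟨y₀, hl.2.1 y₀, by simpa⟩)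
  obtain ⟨hzS, l₁, l₂, rfl, hl₁⟩ := List.find?_eq_some_iff_append.mp hz
  refine ⟨z, by simpa using hzS, fun T hT => greedy_append_cons_le_card_succ hl.1 T
    fun y hy hadj => hT y hadj (by simpa using hl₁ y hy), ?_⟩
  rcases l₁ with _ | ⟨y, l₁⟩
  · exact Or.inl rfl
  · obtain ⟨y', hy', hadj⟩ := hl.exists_adj_of_eq_append (List.cons_ne_nil y l₁)
    exact Or.inr ⟨y', by simpa using hl₁ y' hy', hadj⟩

theorem IsCGC.pos {f : V → ℕ} (hf : IsCGC G f) (w : V) : 0 < f w := by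
  obtain ⟨l, hl, rfl⟩ := hf
  exact greedy_pos hl.1 (hl.2.1 w)

theorem IsCGC.ne_of_adj {f : V → ℕ} (hf : IsCGC G f) {w z : V} (h : G.Adj w z) : f w ≠ f z := by
  obtain ⟨l, hl, rfl⟩ := hf
  exact greedy_ne_of_adj hl.1 (hl.2.1 w) (hl.2.1 z) h

end ConnectedOrder

section Gadget

variable {k : ℕ}

instance : Fintype (GkVert k) :=
  Fintype.ofList (List.ofFn GkVert.U ++ List.ofFn GkVert.W ++ List.ofFn GkVert.M ++
    [.u, .u', .v, .v']) (by intro t; cases t <;> simp [List.mem_ofFn])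

/-- The `(j + 1)`-st positive integer different from `α` (for `0 < α`). -/
def skipColor (α j : ℕ) : ℕ := if j + 1 < α then j + 1 else j + 2

/-- The gadget is colored in the order `u, U, u', M ∖ {w}, v, W, v', w`. -/
def gadgetRank (k : ℕ) : GkVert k → ℕ
  | .u => 0
  | .U i => i + 1
  | .u' => k + 1
  | .M i => if (i : ℕ) = 0 then 3 * k + 3 else k + 1 + i
  | .v => 2 * k + 1
  | .W i => 2 * k + 2 + i
  | .v' => 3 * k + 2

/-- The greedy coloring of the gadget in the order `gadgetRank` when `u` has color `α`. -/
def gadgetColor (k α : ℕ) : GkVert k → ℕ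
  | .U i | .W i => skipColor α i
  | .M i => if (i : ℕ) = 0 then k + 1 else skipColor α (i - 1)
  | _ => α

theorem skipColor_sub_one {α n : ℕ} (hn : 0 < n) (hnα : n < α) : skipColor α (n - 1) = n := by
  unfold skipColor; split_ifs <;> omega

theorem exists_lt_skipColor_eq {α n i : ℕ} (hα : 0 < α) (hn : 0 < n) (hnα : n ≠ α)
    (hlt : n < skipColor α i) : ∃ j < i, skipColor α j = n := by
  rcases lt_or_gt_of_ne hnα with h | h
  · refine ⟨n - 1, ?_, skipColor_sub_one hn h⟩
    unfold skipColor at hlt; split_ifs at hlt <;> omega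
  · refine ⟨n - 2, ?_, ?_⟩ <;> unfold skipColor at * <;> split_ifs at * <;> omega

theorem gadgetColor_pos_le {α : ℕ} (hα : 0 < α) (hαk : α ≤ k) (t : GkVert k) :
    0 < gadgetColor k α t ∧ gadgetColor k α t ≤ k + 1 := by
  cases t <;> simp only [gadgetColor, skipColor] <;> (try split_ifs) <;> omega

theorem gadgetColor_ne_of_adj {α : ℕ} (hαk : α ≤ k) {s t : GkVert k} (h : (Gk k).Adj s t) :
    gadgetColor k α s ≠ gadgetColor k α t := by
  cases s <;> cases t <;> simp [Gk, gadgetColor, skipColor, Fin.ext_iff] at h ⊢ <;>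
    split_ifs <;> omega

theorem gadgetColor_grundy {α : ℕ} (hα : 0 < α) (hαk : α ≤ k) {t : GkVert k} (ht : t ≠ .u)
    {n : ℕ} (hn : 0 < n) (hlt : n < gadgetColor k α t) :
    ∃ s, (Gk k).Adj t s ∧ gadgetColor k α s = n ∧ gadgetRank k s < gadgetRank k t := by
  cases t with
  | u => exact absurd rfl ht
  | U i =>
    by_cases hnα : n = α
    · exact ⟨.u, by simp [Gk], hnα ▸ rfl, by simp only [gadgetRank]; omega⟩
    obtain ⟨j, hj, rfl⟩ := exists_lt_skipColor_eq hα hn hnα hlt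
    refine ⟨.U ⟨j, by omega⟩, ?_, rfl, by simp only [gadgetRank]; omega⟩
    simp [Gk]; exact Fin.ne_of_val_ne (by dsimp only; omega)
  | W i =>
    by_cases hnα : n = α
    · exact ⟨.v, by simp [Gk], hnα ▸ rfl, by simp only [gadgetRank]; omega⟩
    obtain ⟨j, hj, rfl⟩ := exists_lt_skipColor_eq hα hn hnα hlt
    refine ⟨.W ⟨j, by omega⟩, ?_, rfl, by simp only [gadgetRank]; omega⟩
    simp [Gk]; exact Fin.ne_of_val_ne (by dsimp only; omega)
  | M i =>
    by_cases hnα : n = α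
    · by_cases hi : (i : ℕ) = 0
      · exact ⟨.u', by simp [Gk, hi], hnα ▸ rfl, by simp only [gadgetRank, hi, ↓reduceIte]; omega⟩
      · exact ⟨.u, by simp [Gk, hi], hnα ▸ rfl, by simp only [gadgetRank, hi, ↓reduceIte]; omega⟩
    -- `w` has color `k + 1 = skipColor α (k - 1)`
    have hlt' : n < skipColor α (if (i : ℕ) = 0 then k - 1 else i - 1) := by
      simp only [gadgetColor] at hlt; unfold skipColor at hlt ⊢; split_ifs at hlt ⊢ <;> omega
    obtain ⟨j, hj, rfl⟩ := exists_lt_skipColor_eq hα hn hnα hlt'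
    refine ⟨.M ⟨j + 1, by split_ifs at hj <;> omega⟩, ?_, by simp [gadgetColor], ?_⟩
    · simp [Gk]; exact Fin.ne_of_val_ne (by dsimp only; split_ifs at hj <;> omega)
    · simp [gadgetRank]; split_ifs at hj ⊢ <;> omega
  | u' =>
    simp only [gadgetColor] at hlt
    refine ⟨.U ⟨n - 1, by omega⟩, by simp [Gk], skipColor_sub_one hn hlt, ?_⟩
    simp only [gadgetRank]; omega
  | v =>
    simp only [gadgetColor] at hlt
    refine ⟨.M ⟨n, by omega⟩, by simp [Gk]; omega, ?_, ?_⟩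
    · simp [gadgetColor, hn.ne', skipColor_sub_one hn hlt]
    · simp [gadgetRank, hn.ne']; omega
  | v' =>
    simp only [gadgetColor] at hlt
    refine ⟨.W ⟨n - 1, by omega⟩, by simp [Gk], skipColor_sub_one hn hlt, ?_⟩
    simp only [gadgetRank]; omega

theorem exists_adj_gadgetRank_lt (hk : 2 ≤ k) {t : GkVert k} (ht : t ≠ .u) :
    ∃ s, (Gk k).Adj t s ∧ gadgetRank k s < gadgetRank k t := by
  cases t with
  | u => exact absurd rfl ht
  | U i => exact ⟨.u, by simp [Gk], by simp only [gadgetRank]; omega⟩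
  | W i => exact ⟨.v, by simp [Gk], by simp only [gadgetRank]; omega⟩
  | M i =>
    by_cases hi : (i : ℕ) = 0
    · exact ⟨.u', by simp [Gk, hi], by simp only [gadgetRank, hi, ↓reduceIte]; omega⟩
    · exact ⟨.u, by simp [Gk, hi], by simp only [gadgetRank, hi, ↓reduceIte]; omega⟩
  | u' => exact ⟨.U ⟨0, by omega⟩, by simp [Gk], by simp only [gadgetRank]; omega⟩
  | v => exact ⟨.M ⟨1, by omega⟩, by simp [Gk], by simp [gadgetRank]; omega⟩
  | v' => exact ⟨.W ⟨0, by omega⟩, by simp [Gk], by simp only [gadgetRank]; omega⟩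

variable (C : (Gk k).Coloring ℕ)

theorem gk_coloring_injective_U : Function.Injective fun i => C (.U i) := fun i j hij => by
  by_contra hne; exact C.valid (by simp [Gk, hne]) hij

theorem gk_coloring_injective_W : Function.Injective fun i => C (.W i) := fun i j hij => by
  by_contra hne; exact C.valid (by simp [Gk, hne]) hij

theorem gk_coloring_injective_M : Function.Injective fun i => C (.M i) := fun i j hij => by
  by_contra hne; exact C.valid (by simp [Gk, hne]) hij

theorem gk_exists_lt_coloring (hpos : ∀ t, 0 < C t) : ∃ t, k < C t := by
  by_contra! h
  obtain ⟨i, hi⟩ := exists_apply_eq_of_injective_Icc (gk_coloring_injective_U C)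
    (fun i => Finset.mem_Icc.mpr ⟨hpos _, h _⟩) (Finset.mem_Icc.mpr ⟨hpos .u, h .u⟩)
  exact C.valid (by simp [Gk]) hi

/-- The `(k + 1)`-cliques `U ∪ {u}` and `W ∪ {v}` use all colors `1, …, k + 1`, and the
`k`-clique `M`, which avoids `k + 1`, uses all colors `1, …, k`. -/
theorem gk_coloring_top (hpos : ∀ t, 0 < C t) (hle : ∀ t, C t ≤ k + 1) (hu : C .u = k + 1) :
    C .u' = k + 1 ∧ C .v = k + 1 ∧ C .v' = k + 1 := by
  have hu' : C .u' = k + 1 := by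
    by_contra hne
    obtain ⟨i, hi⟩ := exists_apply_eq_of_injective_Icc (gk_coloring_injective_U C)
      (fun i => Finset.mem_Icc.mpr ⟨hpos _, by
        have := C.valid (show (Gk k).Adj (.U i) .u by simp [Gk]); have := hle (.U i); omega⟩)
      (Finset.mem_Icc.mpr ⟨hpos .u', by have := hle .u'; omega⟩)
    exact C.valid (show (Gk k).Adj .u' (.U i) by simp [Gk]) hi.symm
  have hv'v : C .v' = C .v := by
    have hinj : Function.Injective (Fin.cons (C .v) fun i => C (.W i) : Fin (k + 1) → ℕ) :=
      Fin.cons_injective_iff.mpr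
        ⟨fun ⟨i, hi⟩ => C.valid (show (Gk k).Adj (.W i) .v by simp [Gk]) hi,
          gk_coloring_injective_W C⟩
    obtain ⟨i, hi⟩ := exists_apply_eq_of_injective_Icc hinj
      (fun i => Finset.mem_Icc.mpr ⟨by cases i using Fin.cases <;> exact hpos _,
        by cases i using Fin.cases <;> exact hle _⟩)
      (Finset.mem_Icc.mpr ⟨hpos .v', hle .v'⟩)
    cases i using Fin.cases with
    | zero => exact hi.symm
    | succ j => exact absurd hi (C.valid (show (Gk k).Adj (.W j) .v' by simp [Gk]))
  have hv : C .v = k + 1 := by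
    by_contra hne
    obtain ⟨i, hi⟩ := exists_apply_eq_of_injective_Icc (gk_coloring_injective_M C)
      (fun i => Finset.mem_Icc.mpr ⟨hpos _, by
        have := hle (.M i)
        by_cases h0 : (i : ℕ) = 0
        · have := C.valid (show (Gk k).Adj (.M i) .u' by simp [Gk, h0]); omega
        · have := C.valid (show (Gk k).Adj (.M i) .u by simp [Gk, h0]); omega⟩)
      (Finset.mem_Icc.mpr ⟨hpos .v, by have := hle .v; omega⟩)
    by_cases h0 : (i : ℕ) = 0
    · exact C.valid (show (Gk k).Adj (.M i) .v' by simp [Gk, h0]) (hi.trans hv'v.symm)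
    · exact C.valid (show (Gk k).Adj (.M i) .v by simp [Gk, h0]) hi
  exact ⟨hu', hv, hv'v.trans hv⟩

end Gadget

abbrev GstarVert (V : Type*) (k : ℕ) := V ⊕ (V × {t : GkVert k // t ≠ GkVert.u})

section Gstar

variable {V : Type*} [DecidableEq V] {G : SimpleGraph V} {k : ℕ}

@[simp]
theorem gadgetEmb_u (a : V) : gadgetEmb k a .u = .inl a := by simp [gadgetEmb]

theorem gadgetEmb_of_ne {a : V} {t : GkVert k} (ht : t ≠ .u) :
    gadgetEmb k a t = .inr (a, ⟨t, ht⟩) := by simp [gadgetEmb, ht]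

theorem gadgetEmb_eq_inl {a b : V} {t : GkVert k} :
    gadgetEmb k a t = .inl b ↔ t = .u ∧ a = b := by
  by_cases ht : t = .u <;> simp [gadgetEmb, ht]

theorem gadgetEmb_inj {a b : V} {s t : GkVert k} :
    gadgetEmb k a s = gadgetEmb k b t ↔ a = b ∧ s = t := by
  by_cases hs : s = .u <;> by_cases ht : t = .u <;>
    simp [gadgetEmb, hs, ht, eq_comm (a := GkVert.u)]

theorem exists_eq_gadgetEmb (z : GstarVert V k) : ∃ a t, z = gadgetEmb k a t := by
  rcases z with a | ⟨a, t, ht⟩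
  · exact ⟨a, .u, (gadgetEmb_u a).symm⟩
  · exact ⟨a, t, (gadgetEmb_of_ne ht).symm⟩

theorem gstar_adj_gadgetEmb {a : V} {t : GkVert k} {z : GstarVert V k} :
    (Gstar G k).Adj (gadgetEmb k a t) z ↔
      (t = .u ∧ ∃ b, G.Adj a b ∧ z = .inl b) ∨ ∃ s, (Gk k).Adj t s ∧ z = gadgetEmb k a s := by
  rw [Gstar, fromRel_adj]
  constructor
  · rintro ⟨-, (⟨a', b, h, rfl, hab⟩ | ⟨a', s, s', hss', h, rfl⟩) |
      (⟨b, a', rfl, h, hab⟩ | ⟨a', s, s', hss', rfl, h⟩)⟩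
    · obtain ⟨rfl, rfl⟩ := gadgetEmb_eq_inl.mp h
      exact Or.inl ⟨rfl, b, hab, rfl⟩
    · obtain ⟨rfl, rfl⟩ := gadgetEmb_inj.mp h
      exact Or.inr ⟨s', hss', rfl⟩
    · obtain ⟨rfl, rfl⟩ := gadgetEmb_eq_inl.mp h
      exact Or.inl ⟨rfl, b, hab.symm, rfl⟩
    · obtain ⟨rfl, rfl⟩ := gadgetEmb_inj.mp h
      exact Or.inr ⟨s, hss'.symm, rfl⟩
  · rintro (⟨rfl, b, hab, rfl⟩ | ⟨s, hts, rfl⟩)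
    · exact ⟨by simp [hab.ne], Or.inl (Or.inl ⟨a, b, by simp, rfl, hab⟩)⟩
    · exact ⟨fun h => hts.ne (gadgetEmb_inj.mp h).2, Or.inl (Or.inr ⟨a, t, s, hts, rfl, rfl⟩)⟩

theorem gstar_adj_inl {a b : V} : (Gstar G k).Adj (.inl a) (.inl b) ↔ G.Adj a b := by
  rw [← gadgetEmb_u a, gstar_adj_gadgetEmb]
  simp [gadgetEmb_eq_inl, eq_comm]

theorem gstar_adj_gadgetEmb_of_adj (a : V) {s t : GkVert k} (h : (Gk k).Adj s t) :
    (Gstar G k).Adj (gadgetEmb k a s) (gadgetEmb k a t) :=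
  gstar_adj_gadgetEmb.mpr (Or.inr ⟨t, h, rfl⟩)

theorem IsCGC.exists_gk_coloring {f : GstarVert V k → ℕ} (hf : IsCGC (Gstar G k) f) (a : V) :
    ∃ C : (Gk k).Coloring ℕ, ∀ t, C t = f (gadgetEmb k a t) :=
  ⟨Coloring.mk _ fun h => hf.ne_of_adj (gstar_adj_gadgetEmb_of_adj a h), fun _ => rfl⟩

theorem IsCGC.exists_gstar_lt {f : GstarVert V k → ℕ} (hf : IsCGC (Gstar G k) f) (a : V) :
    ∃ z, k < f z := by
  obtain ⟨C, hC⟩ := hf.exists_gk_coloring a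
  obtain ⟨t, ht⟩ := gk_exists_lt_coloring C fun t => hC t ▸ hf.pos _
  exact ⟨_, hC t ▸ ht⟩

end Gstar

section Forward

variable {V : Type*} [DecidableEq V] {G : SimpleGraph V} {k : ℕ}

def gstarRank (k : ℕ) : GstarVert V k → ℕ := Sum.elim (fun _ => 0) fun p => gadgetRank k p.2

theorem gstarRank_gadgetEmb (a : V) (t : GkVert k) :
    gstarRank k (gadgetEmb k a t) = gadgetRank k t := by
  by_cases ht : t = .u
  · subst ht; simp [gstarRank, gadgetRank]
  · simp [gadgetEmb_of_ne ht, gstarRank]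

def extendToGadgets (k : ℕ) (f : GstarVert V k → ℕ) : GstarVert V k → ℕ :=
  Sum.elim (fun b => f (.inl b)) fun p => gadgetColor k (f (.inl p.1)) p.2

theorem extendToGadgets_gadgetEmb (f : GstarVert V k → ℕ) (a : V) (t : GkVert k) :
    extendToGadgets k f (gadgetEmb k a t) = gadgetColor k (f (.inl a)) t := by
  by_cases ht : t = .u
  · subst ht; simp [extendToGadgets, gadgetColor]
  · simp [gadgetEmb_of_ne ht, extendToGadgets]

theorem greedy_gstar_map_inl_le {c : V → ℕ} (hc : ∀ a b, G.Adj a b → c a ≠ c b)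
    (hcpos : ∀ b, 0 < c b) {x : V} (hcx : c x = 1) {l : List V} (hnd : (x :: l).Nodup)
    (hsort : l.Pairwise fun a b => c a ≤ c b) {b : V} (hb : b ∈ x :: l) :
    0 < greedy (Gstar G k) ((x :: l).map .inl) (.inl b) ∧
      greedy (Gstar G k) ((x :: l).map .inl) (.inl b) ≤ c b := by
  let c' : GstarVert V k → ℕ := Sum.elim c fun _ => 0
  have hpos : ∀ w ∈ (x :: l).map Sum.inl, 0 < c' w := by
    intro w hw
    obtain ⟨b', -, rfl⟩ := List.mem_map.mp hw
    exact hcpos b'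
  refine greedyFrom_le_of_pairwise (Gstar G k) (c := c') (hnd.map Sum.inl_injective) ?_
    (fun _ _ => rfl) (fun w hw _ _ _ => hpos w hw) hpos _ (List.mem_map_of_mem hb)
  rw [List.pairwise_map, List.pairwise_cons]
  refine ⟨fun a _ h => ?_, hsort.imp_of_mem fun _ _ hab h => ?_⟩
  · have := hc _ _ (gstar_adj_inl.mp h); have := hcpos a; simp only [c', Sum.elim_inl]; omega
  · have := hc _ _ (gstar_adj_inl.mp h); simp only [c', Sum.elim_inl]; omega

theorem greedyFrom_gstar_map_inr {f : GstarVert V k → ℕ}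
    (hf : ∀ b, 0 < f (.inl b) ∧ f (.inl b) ≤ k) (hf' : ∀ p, f (.inr p) = 0)
    {l : List (V × {t : GkVert k // t ≠ .u})} (hnd : l.Nodup) (hmem : ∀ p, p ∈ l)
    (hsort : l.Pairwise fun p q => gadgetRank k p.2 ≤ gadgetRank k q.2) :
    greedyFrom (Gstar G k) f (l.map .inr) = extendToGadgets k f := by
  have hgadget : ∀ w ∈ l.map Sum.inr, ∃ a t, t ≠ .u ∧ w = gadgetEmb k a t := by
    intro w hw
    obtain ⟨⟨a, t, ht⟩, -, rfl⟩ := List.mem_map.mp hw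
    exact ⟨a, t, ht, (gadgetEmb_of_ne ht).symm⟩
  refine greedyFrom_eq_of_grundy (Gstar G k) (fun y z => gstarRank k y < gstarRank k z)
    (hnd.map Sum.inr_injective) (List.pairwise_map.mpr (hsort.imp not_lt.mpr)) ?_ ?_ ?_ ?_ ?_
  · intro z hz
    obtain ⟨p, -, rfl⟩ := List.mem_map.mp hz
    exact hf' p
  · rintro (b | p) hz
    · rfl
    · exact absurd (List.mem_map_of_mem (hmem p)) hz
  · intro w hw
    obtain ⟨a, t, -, rfl⟩ := hgadget w hw
    rw [extendToGadgets_gadgetEmb]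
    exact (gadgetColor_pos_le (hf a).1 (hf a).2 t).1
  · intro w hw z hz
    obtain ⟨a, t, ht, rfl⟩ := hgadget w hw
    rcases gstar_adj_gadgetEmb.mp hz with ⟨ht', -⟩ | ⟨s, hts, rfl⟩
    · exact absurd ht' ht
    rw [extendToGadgets_gadgetEmb, extendToGadgets_gadgetEmb]
    exact gadgetColor_ne_of_adj (hf a).2 hts.symm
  · intro w hw n hn hlt
    obtain ⟨a, t, ht, rfl⟩ := hgadget w hw
    rw [extendToGadgets_gadgetEmb] at hlt
    obtain ⟨s, hts, hs, hrank⟩ := gadgetColor_grundy (hf a).1 (hf a).2 ht hn hlt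
    refine ⟨gadgetEmb k a s, gstar_adj_gadgetEmb_of_adj a hts,
      by rw [extendToGadgets_gadgetEmb, hs], Or.inr ?_⟩
    rwa [gstarRank_gadgetEmb, gstarRank_gadgetEmb]

theorem isConnectedOrder_gstar (hk : 2 ≤ k) {x : V} (hx : ∀ y, y ≠ x → G.Adj x y)
    {l : List V} (hnd : (x :: l).Nodup) (hmem : ∀ b, b ∈ x :: l)
    {l' : List (V × {t : GkVert k // t ≠ .u})} (hnd' : l'.Nodup) (hmem' : ∀ p, p ∈ l')
    (hsort' : l'.Pairwise fun p q => gadgetRank k p.2 ≤ gadgetRank k q.2) :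
    IsConnectedOrder (Gstar G k) ((x :: l).map .inl ++ l'.map .inr) := by
  let ρ : GstarVert V k → ℕ := fun z => if z = .inl x then 0 else gstarRank k z + 1
  have hρ : ∀ z, ρ z ≤ gstarRank k z + 1 := fun z => by dsimp only [ρ]; split_ifs <;> omega
  have hρinl : ∀ b ∈ l, ρ (.inl b) = 1 := fun b hb => by
    simp [ρ, gstarRank, show b ≠ x from fun h => (List.nodup_cons.mp hnd).1 (h ▸ hb)]
  have hnd'' := (hnd.map Sum.inl_injective).append (hnd'.map Sum.inr_injective)
    (by simp [List.disjoint_left])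
  have hmem'' : ∀ z, z ∈ (x :: l).map Sum.inl ++ l'.map Sum.inr := by
    rintro (b | p)
    · simpa using hmem b
    · simpa using hmem' p
  have hsort'' : ((x :: l).map Sum.inl ++ l'.map Sum.inr).Pairwise fun p q => ρ p ≤ ρ q := by
    refine List.pairwise_append.mpr ⟨?_, ?_, ?_⟩
    · refine List.pairwise_map.mpr (List.pairwise_cons.mpr ⟨fun _ _ => by simp [ρ], ?_⟩)
      exact List.pairwise_of_forall_mem_list fun a ha b hb => by rw [hρinl a ha, hρinl b hb]
    · exact List.pairwise_map.mpr (hsort'.imp fun h => by simpa [ρ, gstarRank] using h)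
    · simp only [List.mem_map]
      rintro _ ⟨b, hb, rfl⟩ _ ⟨p, -, rfl⟩
      refine (hρ _).trans ?_
      simp [ρ, gstarRank]
  rw [List.map_cons, List.cons_append] at hnd'' hmem'' hsort'' ⊢
  refine isConnectedOrder_of_rank ρ hnd'' hmem'' hsort'' fun z hz => ?_
  obtain ⟨a, t, rfl⟩ := exists_eq_gadgetEmb z
  by_cases ht : t = .u
  · subst ht
    rw [gadgetEmb_u] at hz ⊢
    have hax : a ≠ x := fun h => hz (h ▸ rfl)
    refine ⟨.inl x, gstar_adj_inl.mpr (hx a hax).symm, ?_⟩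
    simp [ρ, hz]
  · obtain ⟨s, hts, hrank⟩ := exists_adj_gadgetRank_lt hk ht
    refine ⟨gadgetEmb k a s, gstar_adj_gadgetEmb_of_adj a hts, (hρ _).trans_lt ?_⟩
    simp only [ρ, if_neg hz, gstarRank_gadgetEmb]
    omega

theorem exists_isCGC_gstar_le [Fintype V] (hk : 2 ≤ k) {x : V} (hx : ∀ y, y ≠ x → G.Adj x y)
    (hcol : G.Colorable k) : ∃ f, IsCGC (Gstar G k) f ∧ ∀ z, f z ≤ k + 1 := by
  obtain ⟨c, hc, hcr, hcx⟩ := hcol.exists_color_eq_one x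
  obtain ⟨l, hlnd, hlmem, hlsort⟩ := (Finset.univ.erase x).exists_list_nodup_pairwise_le c
  obtain ⟨l', hnd', hmem', hsort'⟩ := Finset.exists_list_nodup_pairwise_le
    (Finset.univ : Finset (V × {t : GkVert k // t ≠ GkVert.u})) fun p => gadgetRank k p.2
  replace hmem' : ∀ p, p ∈ l' := by simpa using hmem'
  have hnd : (x :: l).Nodup := List.nodup_cons.mpr ⟨by simp [hlmem], hlnd⟩
  have hmem : ∀ b, b ∈ x :: l := fun b => by by_cases hb : b = x <;> simp [hlmem, hb]
  set f := greedy (Gstar G k) ((x :: l).map .inl)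
  have hf : ∀ b, 0 < f (.inl b) ∧ f (.inl b) ≤ k := fun b =>
    (greedy_gstar_map_inl_le hc (fun b => (hcr b).1) hcx hnd hlsort (hmem b)).imp_right
      (·.trans (hcr b).2)
  have hf' : ∀ p, f (.inr p) = 0 := fun p => greedyFrom_of_notMem _ (by simp)
  refine ⟨extendToGadgets k f, ⟨_, isConnectedOrder_gstar hk hx hnd hmem hnd' hmem' hsort', ?_⟩,
    ?_⟩
  · rw [greedy, greedyFrom_append]
    exact (greedyFrom_gstar_map_inr hf hf' hnd' hmem' hsort').symm
  · rintro (b | p)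
    · exact (hf b).2.trans k.le_succ
    · exact (gadgetColor_pos_le (hf p.1).1 (hf p.1).2 p.2).2

end Forward

section Backward

variable {k : ℕ}

def GkVert.IsWSide : GkVert k → Prop
  | .W _ | .v | .v' => True
  | _ => False

def GkVert.IsFarSide : GkVert k → Prop
  | .M _ | .W _ | .v | .v' => True
  | _ => False

theorem GkVert.IsWSide.isFarSide {t : GkVert k} (ht : t.IsWSide) : t.IsFarSide := by
  cases t <;> simp_all [GkVert.IsWSide, GkVert.IsFarSide]

theorem gk_adj_of_isWSide {t s : GkVert k} (h : (Gk k).Adj t s) (ht : t.IsWSide)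
    (hs : ¬ s.IsWSide) : (t = .v ∨ t = .v') ∧ ∃ i, s = .M i := by
  cases t <;> cases s <;> simp_all [Gk, GkVert.IsWSide]

theorem gk_adj_of_isFarSide {t s : GkVert k} (h : (Gk k).Adj t s) (ht : ¬ t.IsFarSide)
    (hs : s.IsFarSide) : (t = .u ∨ t = .u') ∧ ∃ i, s = .M i := by
  cases t <;> cases s <;> simp_all [Gk, GkVert.IsFarSide]

theorem gk_exists_not_adj_M (hk : 2 ≤ k) {t : GkVert k}
    (ht : t = .u ∨ t = .u' ∨ t = .v ∨ t = .v') : ∃ j, ¬ (Gk k).Adj t (.M j) := by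
  rcases ht with rfl | rfl | rfl | rfl
  · exact ⟨⟨0, by omega⟩, by simp [Gk]⟩
  · exact ⟨⟨1, by omega⟩, by simp [Gk]⟩
  · exact ⟨⟨0, by omega⟩, by simp [Gk]⟩
  · exact ⟨⟨1, by omega⟩, by simp [Gk]⟩

variable {V : Type*} [DecidableEq V] {G : SimpleGraph V}

theorem gstar_adj_of_isWSide {a : V} {t : GkVert k} (ht : t.IsWSide) {y : GstarVert V k}
    (h : (Gstar G k).Adj (gadgetEmb k a t) y) (hy : y ∉ gadgetEmb k a '' {s | s.IsWSide}) :
    (t = .v ∨ t = .v') ∧ ∃ i, y = gadgetEmb k a (.M i) := by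
  rcases gstar_adj_gadgetEmb.mp h with ⟨rfl, -⟩ | ⟨s, hts, rfl⟩
  · exact ht.elim
  obtain ⟨htv, i, rfl⟩ := gk_adj_of_isWSide hts ht fun hs => hy ⟨s, hs, rfl⟩
  exact ⟨htv, i, rfl⟩

theorem gstar_adj_of_isFarSide {a : V} {z y : GstarVert V k} (h : (Gstar G k).Adj z y)
    (hz : z ∉ gadgetEmb k a '' {s | s.IsFarSide})
    (hy : y ∈ gadgetEmb k a '' {s | s.IsFarSide}) :
    ∃ t, (t = .u ∨ t = .u') ∧ z = gadgetEmb k a t ∧ ∃ i, y = gadgetEmb k a (.M i) := by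
  obtain ⟨s, hs, rfl⟩ := hy
  obtain ⟨b, t, rfl⟩ := exists_eq_gadgetEmb z
  rcases gstar_adj_gadgetEmb.mp h with ⟨-, b', -, h'⟩ | ⟨s', hts, h'⟩
  · obtain ⟨rfl, -⟩ := gadgetEmb_eq_inl.mp h'
    exact absurd hs (by simp [GkVert.IsFarSide])
  obtain ⟨rfl, rfl⟩ := gadgetEmb_inj.mp h'
  obtain ⟨htu, i, rfl⟩ := gk_adj_of_isFarSide hts (fun ht => hz ⟨t, ht, rfl⟩) hs
  exact ⟨t, htu, rfl, i, rfl⟩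

theorem le_of_outside_neighbors_in_M (hk : 2 ≤ k) {a : V} {t : GkVert k}
    (ht : t = .u ∨ t = .u' ∨ t = .v ∨ t = .v') {S : Set (GstarVert V k)} {m : ℕ}
    (hbound : ∀ T : Finset (GstarVert V k),
      (∀ y, (Gstar G k).Adj (gadgetEmb k a t) y → y ∉ S → y ∈ T) → m ≤ T.card + 1)
    (hM : ∀ y, (Gstar G k).Adj (gadgetEmb k a t) y → y ∉ S → ∃ i, y = gadgetEmb k a (.M i)) :
    m ≤ k := by
  classical
  obtain ⟨j, hj⟩ := gk_exists_not_adj_M hk ht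
  set I := Finset.univ.filter fun i => (Gk k).Adj t (.M i)
  have hm := hbound (I.image fun i => gadgetEmb k a (.M i)) fun y hy hyS => by
    obtain ⟨i, rfl⟩ := hM y hy hyS
    refine Finset.mem_image_of_mem _ (Finset.mem_filter.mpr ⟨Finset.mem_univ _, ?_⟩)
    rcases gstar_adj_gadgetEmb.mp hy with ⟨rfl, b, -, h⟩ | ⟨s, hts, h⟩
    · simp [gadgetEmb_eq_inl] at h
    · rwa [(gadgetEmb_inj.mp h).2]
  have hI : I.card < k := by
    simpa using Finset.card_lt_card (Finset.filter_ssubset.mpr ⟨j, Finset.mem_univ _, hj⟩)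
  have := Finset.card_image_le (s := I) (f := fun i => gadgetEmb k a (.M i))
  omega

theorem IsCGC.gstar_inl_le (hk : 2 ≤ k) {f : GstarVert V k → ℕ} (hf : IsCGC (Gstar G k) f)
    (hle : ∀ z, f z ≤ k + 1) (a : V) : f (.inl a) ≤ k := by
  by_contra! hfa
  obtain ⟨C, hC⟩ := hf.exists_gk_coloring a
  obtain ⟨hu', hv, hv'⟩ := gk_coloring_top C (fun t => hC t ▸ hf.pos _)
    (fun t => hC t ▸ hle _) (by rw [hC, gadgetEmb_u]; exact le_antisymm (hle _) hfa)
  have htop : ∀ t, (t = .u ∨ t = .u' ∨ t = .v ∨ t = .v') → k < f (gadgetEmb k a t) := by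
    rintro t (rfl | rfl | rfl | rfl) <;> simp only [gadgetEmb_u, ← hC, hu', hv, hv'] <;> omega
  obtain ⟨l, hl, rfl⟩ := hf
  obtain ⟨z, ⟨t, ht, rfl⟩, hbound, hhead | ⟨y, hy, hzy⟩⟩ :=
    hl.exists_first_mem (gadgetEmb k a '' {s | s.IsWSide}) ⟨_, .v, trivial, rfl⟩
  · have ha : Sum.inl a ∉ gadgetEmb k a '' {s | s.IsFarSide} := fun ⟨s, hs, h⟩ => by
      obtain ⟨rfl, -⟩ := gadgetEmb_eq_inl.mp h
      exact hs
    obtain ⟨z', hz', hbound', hhead' | ⟨y, hy, hzy⟩⟩ :=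
      hl.exists_first_mem (gadgetEmb k a '' {s | s.IsFarSide})ᶜ ⟨_, ha⟩
    · obtain rfl : z' = gadgetEmb k a t := Option.some_injective _ (hhead'.symm.trans hhead)
      exact hz' ⟨t, GkVert.IsWSide.isFarSide ht, rfl⟩
    · obtain ⟨t', ht', rfl, -⟩ := gstar_adj_of_isFarSide hzy hz' (not_not.mp hy)
      refine (htop t' (ht'.imp id Or.inl)).not_ge (le_of_outside_neighbors_in_M hk
        (ht'.imp id Or.inl) hbound' fun y' hy' hyS' => ?_)
      exact (gstar_adj_of_isFarSide hy' hz' (not_not.mp hyS')).choose_spec.2.2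
  · obtain ⟨htv, -⟩ := gstar_adj_of_isWSide ht hzy hy
    exact (htop t (Or.inr (Or.inr htv))).not_ge (le_of_outside_neighbors_in_M hk
      (Or.inr (Or.inr htv)) hbound fun y' hy' hyS' => (gstar_adj_of_isWSide ht hy' hyS').2)

theorem IsCGC.colorable_of_gstar (hk : 2 ≤ k) {f : GstarVert V k → ℕ} (hf : IsCGC (Gstar G k) f)
    (hle : ∀ z, f z ≤ k + 1) : G.Colorable k := by
  have hrange : ∀ a, 0 < f (.inl a) ∧ f (.inl a) ≤ k := fun a =>
    ⟨hf.pos _, hf.gstar_inl_le hk hle a⟩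
  refine ⟨Coloring.mk (fun a => ⟨f (.inl a) - 1, by have := hrange a; omega⟩) fun {a b} h hab => ?_⟩
  have := hf.ne_of_adj (gstar_adj_inl.mpr h)
  have := hrange a; have := hrange b
  simp only [Fin.mk.injEq] at hab
  omega

end Backward

theorem statement5_general {V : Type*} [Fintype V] [DecidableEq V]
    (k : ℕ) (hk : 3 ≤ k) (G : SimpleGraph V)
    (x : V) (hx : ∀ y : V, y ≠ x → G.Adj x y) :
    G.chromaticNumber ≤ (k : ℕ) ↔ connChrom (Gstar G k) = k + 1 := by
  rw [chromaticNumber_le_iff_colorable]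
  constructor
  · intro hcol
    obtain ⟨f, hf, hle⟩ := exists_isCGC_gstar_le (by omega) hx hcol
    refine le_antisymm (Nat.sInf_le ⟨f, hf, hle⟩) (le_csInf ⟨_, f, hf, hle⟩ ?_)
    rintro m ⟨f', hf', hle'⟩
    obtain ⟨z, hz⟩ := hf'.exists_gstar_lt x
    exact hz.trans_le (hle' z)
  · intro hc
    unfold connChrom at hc
    obtain ⟨f, hf, hle⟩ := hc ▸ Nat.sInf_mem (Nat.nonempty_of_pos_sInf (by rw [hc]; omega))
    exact hf.colorable_of_gstar (by omega) hle

theorem statement5 {V : Type*} [Fintype V] [DecidableEq V]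
    (k : ℕ) (hk : 3 ≤ k) (G : SimpleGraph V) (hG : G.Connected)
    (x : V) (hx : ∀ y : V, y ≠ x → G.Adj x y)
    (hcol : G.chromaticNumber ≤ (k + 1 : ℕ)) :
    G.chromaticNumber ≤ (k : ℕ) ↔ connChrom (Gstar G k) = k + 1 :=
  statement5_general k hk G x hx
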